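/- Let κ_{c,t} = −cos(Y_{c₅}(ℓ+t)) be the geodesic curvature of the constant-distance curve β_{c,t} in the collar around a geodesic of length ℓ+t, where Y_{c₅}(ℓ) = 2 arctan(e^{c₅} tan(½ arctan sinh(ℓ/2))). Then |d/dt κ_{c,t}|_{t=0}| = sin(Y_{c₅}(ℓ)) · |Y_{c₅}′(ℓ)| ≤ C ℓ for all ℓ ∈ (0, L̄], with C depending only on c₅ and L̄. -/

import Mathlib

open Real

/-- `Y_c(ℓ) = 2 arctan(e^c tan(½ arctan(sinh(ℓ/2))))`. -/
noncomputable def Ycurve (c ℓ : ℝ) : ℝ :=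
  2 * Real.arctan (Real.exp c * Real.tan (Real.arctan (Real.sinh (ℓ / 2)) / 2))

/-!
`Y_c = 2 arctan s` with `s = e^c tan(θ/2)` and `θ = arctan sinh(ℓ/2)`, so `sin Y_c = 2s/(1+s²) ≤ 2s`,
and `tan(θ/2) ≤ tan θ = sinh(ℓ/2) = O(ℓ)`. The chain rule gives
`Y_c' = e^c / (2cos²(θ/2) · cosh(ℓ/2) · (1+s²))`, whose three denominator factors are at least `1`
(`2cos²(θ/2) = 1 + cos θ` with `|θ| < π/2`), so `0 ≤ Y_c' ≤ e^c`. Hence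
`|d/dt κ| = sin Y_c · Y_c' = O(e^{2c} ℓ)` on `(0, L̄]`.
-/

namespace Real

lemma sinh_le_mul_exp {x : ℝ} (hx : 0 ≤ x) : sinh x ≤ x * exp x := by
  have hexp : exp x * exp (-x) = 1 := by rw [← exp_add, add_neg_cancel, exp_zero]
  rw [sinh_eq]
  nlinarith [add_one_le_exp (-x), exp_pos x, one_le_exp hx]

lemma sin_two_mul_arctan (x : ℝ) : sin (2 * arctan x) = 2 * x / (1 + x ^ 2) := by
  rw [sin_eq_two_mul_tan_half_div_one_add_tan_half_sq, mul_div_cancel_left₀ _ two_ne_zero,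
    tan_arctan]

lemma tan_arctan_div_two_nonneg {x : ℝ} (hx : 0 ≤ x) : 0 ≤ tan (arctan x / 2) :=
  tan_nonneg_of_nonneg_of_le_pi_div_two (by linarith [arctan_nonneg.mpr hx])
    (by linarith [arctan_lt_pi_div_two x, pi_pos])

lemma tan_arctan_div_two_le {x : ℝ} (hx : 0 ≤ x) : tan (arctan x / 2) ≤ x := by
  have h0 := arctan_nonneg.mpr hx
  have hlt := arctan_lt_pi_div_two x
  conv_rhs => rw [← tan_arctan x]
  exact strictMonoOn_tan.monotoneOn ⟨by linarith [pi_pos], by linarith⟩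
    ⟨by linarith [pi_pos], hlt⟩ (by linarith)

lemma one_le_two_mul_cos_sq_arctan_div_two (x : ℝ) : 1 ≤ 2 * cos (arctan x / 2) ^ 2 := by
  rw [cos_sq, mul_div_cancel₀ _ two_ne_zero]
  linarith [cos_arctan_pos x]

lemma cos_arctan_div_two_pos (x : ℝ) : 0 < cos (arctan x / 2) :=
  cos_pos_of_mem_Ioo ⟨by linarith [neg_pi_div_two_lt_arctan x, pi_pos],
    by linarith [arctan_lt_pi_div_two x, pi_pos]⟩

lemma hasDerivAt_arctan_sinh (x : ℝ) : HasDerivAt (fun y => arctan (sinh y)) (cosh x)⁻¹ x := by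
  convert (hasDerivAt_sinh x).arctan using 1
  rw [← cosh_sq']
  field_simp [(cosh_pos x).ne']

end Real

lemma HasDerivAt.two_mul_arctan_mul_tan_half {f : ℝ → ℝ} {f' x : ℝ} (k : ℝ)
    (hf : HasDerivAt f f' x) (hcos : Real.cos (f x / 2) ≠ 0) :
    HasDerivAt (fun y => 2 * Real.arctan (k * Real.tan (f y / 2)))
      (k * f' / (Real.cos (f x / 2) ^ 2 * (1 + (k * Real.tan (f x / 2)) ^ 2))) x := by
  refine ((((hasDerivAt_tan hcos).comp x (hf.div_const 2)).const_mul k).arctan.const_mul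
    2).congr_deriv ?_
  simp only [Function.comp_apply]
  field_simp

lemma hasDerivAt_Ycurve (c ℓ : ℝ) :
    HasDerivAt (Ycurve c)
      (exp c / (2 * cos (arctan (sinh (ℓ / 2)) / 2) ^ 2 * cosh (ℓ / 2) *
        (1 + (exp c * tan (arctan (sinh (ℓ / 2)) / 2)) ^ 2))) ℓ := by
  have hθ : HasDerivAt (fun y => arctan (sinh (y / 2))) ((cosh (ℓ / 2))⁻¹ * (1 / 2)) ℓ := by
    have h := (hasDerivAt_arctan_sinh (ℓ / 2)).comp ℓ ((hasDerivAt_id' ℓ).div_const 2)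
    exact h
  refine (hθ.two_mul_arctan_mul_tan_half (exp c) (cos_arctan_div_two_pos _).ne').congr_deriv ?_
  field_simp

lemma deriv_Ycurve_nonneg (c ℓ : ℝ) : 0 ≤ deriv (Ycurve c) ℓ := by
  rw [(hasDerivAt_Ycurve c ℓ).deriv]
  positivity

lemma deriv_Ycurve_le_exp (c ℓ : ℝ) : deriv (Ycurve c) ℓ ≤ exp c := by
  rw [(hasDerivAt_Ycurve c ℓ).deriv]
  refine div_le_self (exp_pos c).le ?_
  refine one_le_mul_of_one_le_of_one_le (one_le_mul_of_one_le_of_one_le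
    (one_le_two_mul_cos_sq_arctan_div_two _) (one_le_cosh _)) ?_
  linarith [sq_nonneg (exp c * tan (arctan (sinh (ℓ / 2)) / 2))]

lemma sin_Ycurve_nonneg (c : ℝ) {ℓ : ℝ} (hℓ : 0 ≤ ℓ) : 0 ≤ sin (Ycurve c ℓ) := by
  have htan : 0 ≤ tan (arctan (sinh (ℓ / 2)) / 2) :=
    tan_arctan_div_two_nonneg (sinh_nonneg_iff.mpr (by positivity))
  rw [Ycurve, sin_two_mul_arctan]
  exact div_nonneg (mul_nonneg zero_le_two (mul_nonneg (exp_pos c).le htan)) (by positivity)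

lemma sin_Ycurve_le (c : ℝ) {ℓ : ℝ} (hℓ : 0 ≤ ℓ) : sin (Ycurve c ℓ) ≤ exp c * ℓ * exp (ℓ / 2) := by
  have hu : 0 ≤ sinh (ℓ / 2) := sinh_nonneg_iff.mpr (by positivity)
  set s := exp c * tan (arctan (sinh (ℓ / 2)) / 2)
  have hs : 0 ≤ s := mul_nonneg (exp_pos c).le (tan_arctan_div_two_nonneg hu)
  calc sin (Ycurve c ℓ) = 2 * s / (1 + s ^ 2) := sin_two_mul_arctan s
    _ ≤ 2 * s := div_le_self (by positivity) (by nlinarith)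
    _ ≤ 2 * (exp c * sinh (ℓ / 2)) := by
      gcongr
      exact mul_le_mul_of_nonneg_left (tan_arctan_div_two_le hu) (exp_pos c).le
    _ ≤ 2 * (exp c * (ℓ / 2 * exp (ℓ / 2))) := by
      gcongr
      exact sinh_le_mul_exp (by positivity)
    _ = exp c * ℓ * exp (ℓ / 2) := by ring

lemma deriv_neg_cos_Ycurve_const_add (c ℓ : ℝ) :
    deriv (fun t => -cos (Ycurve c (ℓ + t))) 0 = sin (Ycurve c ℓ) * deriv (Ycurve c) ℓ := by
  rw [deriv_comp_const_add (fun y => -cos (Ycurve c y)), add_zero]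
  exact (hasDerivAt_Ycurve c ℓ).cos.neg.deriv.trans (by rw [(hasDerivAt_Ycurve c ℓ).deriv]; ring)

theorem curvature_variation_bound_general (c₅ Lbar : ℝ) :
    ∃ C : ℝ, 0 < C ∧ ∀ ℓ : ℝ, 0 < ℓ → ℓ ≤ Lbar →
      |deriv (fun t => -Real.cos (Ycurve c₅ (ℓ + t))) 0|
          = Real.sin (Ycurve c₅ ℓ) * |deriv (Ycurve c₅) ℓ| ∧
      |deriv (fun t => -Real.cos (Ycurve c₅ (ℓ + t))) 0| ≤ C * ℓ := by
  refine ⟨exp c₅ * exp (Lbar / 2) * exp c₅, by positivity, fun ℓ hℓ hℓL => ?_⟩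
  have hsin := sin_Ycurve_nonneg c₅ hℓ.le
  have hY' := deriv_Ycurve_nonneg c₅ ℓ
  rw [deriv_neg_cos_Ycurve_const_add, abs_mul, abs_of_nonneg hsin]
  refine ⟨rfl, ?_⟩
  calc sin (Ycurve c₅ ℓ) * |deriv (Ycurve c₅) ℓ|
      ≤ exp c₅ * ℓ * exp (Lbar / 2) * exp c₅ := by
        rw [abs_of_nonneg hY']
        refine mul_le_mul ((sin_Ycurve_le c₅ hℓ.le).trans ?_) (deriv_Ycurve_le_exp c₅ ℓ) hY'
          (by positivity)
        gcongr
    _ = exp c₅ * exp (Lbar / 2) * exp c₅ * ℓ := by ring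

/-- Let `κ_{c,t} = −cos(Y_{c₅}(ℓ+t))` be the geodesic curvature of the constant-distance curve
in the collar around a geodesic of length `ℓ+t`. Then
`|d/dt κ_{c,t}|_{t=0}| = sin(Y_{c₅}(ℓ)) · |Y_{c₅}′(ℓ)| ≤ C ℓ` for all `ℓ ∈ (0, L̄]`, with `C`
depending only on `c₅` and `L̄`. -/
theorem curvature_variation_bound (c₅ Lbar : ℝ) (hc : 0 < c₅) (hL : 0 < Lbar) :
    ∃ C : ℝ, 0 < C ∧ ∀ ℓ : ℝ, 0 < ℓ → ℓ ≤ Lbar →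
      |deriv (fun t => -Real.cos (Ycurve c₅ (ℓ + t))) 0|
          = Real.sin (Ycurve c₅ ℓ) * |deriv (Ycurve c₅) ℓ| ∧
      |deriv (fun t => -Real.cos (Ycurve c₅ (ℓ + t))) 0| ≤ C * ℓ :=
  curvature_variation_bound_general c₅ Lbar
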